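/- Let $n, d, p$ be non-negative integers with $0 \le d < n$ and $p \le n-d$. For every sparse composition $(c_0,\dots,c_d)$ of $p$ of length $d+1$ and every choice of co-signotopes $\tau_0,\dots,\tau_d$ with $\tau_i \in \bar{\mathcal{S}}_{c_i,i}(n,d)$ for each $i$, there exists a unique co-signotope $\tau \in \bar{\mathcal{S}}_p(n,d)$ whose p-sequence is $(c_0,\dots,c_d)$ and whose $+$-component decomposition satisfies $\Delta(\tau)=(\tau_0,\tau_1,\dots,\tau_d)$. -/

import Mathlib

/-! Common definitions: signotopes and co-signotopes on `[n] = {1, …, n}` (encoded as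
`Finset.Icc 1 n` in `ℕ`), sign functions are `Finset ℕ → Bool` (`true` = `+`, `false` = `-`)
that vanish (are `-`) away from the relevant subsets. -/

open Classical in
/-- The sign function with `+`-set `S` (and `-` elsewhere). -/
noncomputable def ofPlusSet (S : Set (Finset ℕ)) : Finset ℕ → Bool :=
  fun A => if A ∈ S then true else false

/-- Number of sign changes in a list of signs. -/
def signChanges (l : List Bool) : ℕ :=
  ((l.zip l.tail).filter fun p => p.1 ≠ p.2).length

/-- Number of `+`-subsets of a sign function. -/
noncomputable def plusCount (τ : Finset ℕ → Bool) : ℕ :=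
  {A : Finset ℕ | τ A = true}.ncard

/-- The series of signs `τ (C ∪ {x})` for `x ∈ [n] \ C` in increasing order.
For a `d`-subset `B` with `i`-th smallest element `b`, `series n τ (B.erase b)` is
the `(τ,B,i)`-series. -/
def series (n : ℕ) (τ : Finset ℕ → Bool) (C : Finset ℕ) : List Bool :=
  ((Finset.Icc 1 n \ C).sort (· ≤ ·)).map fun x => τ (insert x C)

/-- An `r`-signotope on `[n]`, encoded as a sign function on all of `Finset ℕ`
which is `-` away from the `r`-subsets of `[n]`. -/
def IsSignotope (n r : ℕ) (σ : Finset ℕ → Bool) : Prop :=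
  (∀ A, σ A = true → A ⊆ Finset.Icc 1 n ∧ A.card = r) ∧
  ∀ X : Finset ℕ, X ⊆ Finset.Icc 1 n → X.card = r + 1 →
    signChanges ((X.sort (· ≤ ·)).map fun x => σ (X.erase x)) ≤ 1

/-- A `d`-co-signotope on `[n]`: every `(τ,B,i)`-series has at most one sign change. -/
def IsCoSignotope (n d : ℕ) (τ : Finset ℕ → Bool) : Prop :=
  (∀ A, τ A = true → A ⊆ Finset.Icc 1 n ∧ A.card = d) ∧
  ∀ B : Finset ℕ, B ⊆ Finset.Icc 1 n → B.card = d → ∀ b ∈ B,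
    signChanges (series n τ (B.erase b)) ≤ 1

/-- `𝒮_p(n,r)`: `r`-signotopes on `[n]` with exactly `p` `+`-signs. -/
noncomputable def sigSet (n r p : ℕ) : Set (Finset ℕ → Bool) :=
  {σ | IsSignotope n r σ ∧ plusCount σ = p}

/-- `𝒮_{≤p}(n,r)`. -/
noncomputable def sigSetLe (n r p : ℕ) : Set (Finset ℕ → Bool) :=
  {σ | IsSignotope n r σ ∧ plusCount σ ≤ p}

/-- `𝒮̄_p(n,d)`: `d`-co-signotopes on `[n]` with exactly `p` `+`-subsets. -/
noncomputable def coSigSet (n d p : ℕ) : Set (Finset ℕ → Bool) :=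
  {τ | IsCoSignotope n d τ ∧ plusCount τ = p}

/-- `𝒮̄_{≤p}(n,d)`. -/
noncomputable def coSigSetLe (n d p : ℕ) : Set (Finset ℕ → Bool) :=
  {τ | IsCoSignotope n d τ ∧ plusCount τ ≤ p}

/-- `σ` and `τ` differ by a single step: `σ⁻¹(+) ⊊ τ⁻¹(+)` and `|τ⁻¹(+)| = |σ⁻¹(+)| + 1`. -/
noncomputable def SingleStep (σ τ : Finset ℕ → Bool) : Prop :=
  {A | σ A = true} ⊂ {A | τ A = true} ∧ plusCount τ = plusCount σ + 1

/-- The higher Bruhat order on `r`-signotopes on `[n]`: reflexive-transitive closure of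
the single step relation. -/
noncomputable def BruhatLe (n r : ℕ) (σ τ : Finset ℕ → Bool) : Prop :=
  Relation.ReflTransGen (fun a b => IsSignotope n r a ∧ IsSignotope n r b ∧ SingleStep a b) σ τ

/-- The complementary higher Bruhat order on `d`-co-signotopes on `[n]`. -/
noncomputable def CoBruhatLe (n d : ℕ) (σ τ : Finset ℕ → Bool) : Prop :=
  Relation.ReflTransGen (fun a b => IsCoSignotope n d a ∧ IsCoSignotope n d b ∧ SingleStep a b) σ τ

/-- Adjacency in the graph `G_{n,d}`: `B' = (B \ {x}) ∪ {y}` with no element of `B \ {x}`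
strictly between `x` and `y`. -/
def GAdj (n d : ℕ) (B B' : Finset ℕ) : Prop :=
  B ⊆ Finset.Icc 1 n ∧ B.card = d ∧ B' ⊆ Finset.Icc 1 n ∧ B'.card = d ∧
  ∃ x ∈ B, ∃ y ∈ Finset.Icc 1 n, y ∉ B ∧ B' = insert y (B.erase x) ∧
    ∀ z ∈ B.erase x, ¬(min x y < z ∧ z < max x y)

/-- The source subset `S_{n,d,i} = {1,…,i} ∪ {n-d+i+1,…,n}`. -/
def sourceSubset (n d i : ℕ) : Finset ℕ :=
  Finset.Icc 1 i ∪ Finset.Icc (n - d + i + 1) n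

/-- Connectivity inside the `+`-subsets of `τ` (the induced subgraph `G_{n,d}[τ]`). -/
def plusConn (n d : ℕ) (τ : Finset ℕ → Bool) : Finset ℕ → Finset ℕ → Prop :=
  Relation.ReflTransGen fun A A' => τ A = true ∧ τ A' = true ∧ GAdj n d A A'

/-- The vertex set `𝒞^τ_i` of the `+`-component of `τ` containing `S_{n,d,i}`
(empty if `S_{n,d,i}` is not a `+`-subset). -/
def comp (n d : ℕ) (τ : Finset ℕ → Bool) (i : ℕ) : Set (Finset ℕ) :=
  {B | τ (sourceSubset n d i) = true ∧ τ B = true ∧ plusConn n d τ (sourceSubset n d i) B}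

/-- The `j`-th smallest element (1-based) of a finite set of naturals. -/
def nthElt (B : Finset ℕ) (j : ℕ) : ℕ := (B.sort (· ≤ ·)).getD (j - 1) 0

/-- `b_j` with the conventions `b_0 = 0` and `b_{d+1} = n+1` (as an integer). -/
def extNth (n d : ℕ) (B : Finset ℕ) (j : ℕ) : ℤ :=
  if j = 0 then 0 else if j ≤ d then (nthElt B j : ℤ) else (n : ℤ) + 1

/-- A series is left-aligned if it starts with `+` and ends with `-`. -/
def LeftAligned (l : List Bool) : Prop :=
  l.head? = some true ∧ l.getLast? = some false

/-- A series is right-aligned if it starts with `-` and ends with `+`. -/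
def RightAligned (l : List Bool) : Prop :=
  l.head? = some false ∧ l.getLast? = some true

/-- `𝒮̄_{p,i}(n,d)`: co-signotopes in `𝒮̄_p(n,d)` whose only nonempty `+`-component
is `𝒞^τ_i` (i.e. every `+`-subset lies in `𝒞^τ_i`). -/
noncomputable def coSigOnly (n d p i : ℕ) : Set (Finset ℕ → Bool) :=
  {τ | IsCoSignotope n d τ ∧ plusCount τ = p ∧ ∀ B, τ B = true → B ∈ comp n d τ i}

/-- `Z(d,i)`: points `(a_1,…,a_d) ∈ ℤ_{>0}^d` (0-indexed in Lean) with `a_j ≥ a_{j-1}`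
for `j ∈ [2,i]` and `a_j ≥ a_{j+1}` for `j ∈ [i+1,d-1]` (1-based indices). -/
def ZSet (d i : ℕ) : Set (Fin d → ℤ) :=
  {a | (∀ j, 0 < a j) ∧
    (∀ j k : Fin d, (j : ℕ) + 1 = (k : ℕ) → (k : ℕ) + 1 ≤ i → a j ≤ a k) ∧
    (∀ j k : Fin d, (j : ℕ) + 1 = (k : ℕ) → i ≤ (j : ℕ) → a k ≤ a j)}

/-- A `(d,i)`-Ferrers diagram with respect to `p`. -/
def IsFerrers (d i p : ℕ) (F : Set (Fin d → ℤ)) : Prop :=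
  F ⊆ ZSet d i ∧ F.ncard = p ∧
  ∀ a ∈ F, ∀ a' ∈ ZSet d i, (∀ j, a' j ≤ a j) → a' ∈ F

/-- The number of `(d,i)`-Ferrers diagrams with respect to `p`. -/
noncomputable def ferrersCount (d i p : ℕ) : ℕ :=
  {F : Set (Fin d → ℤ) | IsFerrers d i p F}.ncard

/-- `f_{n,d,i,j}` (here `j` is the 1-based coordinate index). -/
def fFun (n d i j : ℕ) (x : ℕ) : ℤ :=
  if j ≤ i then (x : ℤ) - j + 1 else ((n : ℤ) - x) - ((d : ℤ) - j) + 1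

/-- `g_{n,d,i}` maps a `d`-subset `B = (b_1 < … < b_d)` to
`(f_{n,d,i,1}(b_1), …, f_{n,d,i,d}(b_d))`. -/
def gMap (n d i : ℕ) (B : Finset ℕ) : Fin d → ℤ :=
  fun k => fFun n d i ((k : ℕ) + 1) (nthElt B ((k : ℕ) + 1))

/-- A sparse composition of `p` of length `d+1`. -/
def IsSparseComposition (d p : ℕ) (c : Fin (d + 1) → ℕ) : Prop :=
  (∑ i, c i) = p ∧
  ∀ i : Fin (d + 1), 1 ≤ (i : ℕ) →
    c i = 0 ∨ c ⟨(i : ℕ) - 1, lt_of_le_of_lt (Nat.sub_le _ _) i.isLt⟩ = 0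

/-- The component `τ_i` of the `+`-component decomposition `Δ(τ)`:
the sign function whose `+`-set is `𝒞^τ_i`. -/
noncomputable def compFun (n d : ℕ) (τ : Finset ℕ → Bool) (i : ℕ) : Finset ℕ → Bool :=
  ofPlusSet (comp n d τ i)

/-- Keep the `i` smallest elements of `B` and shift the others by `ñ - n`
(this is `g⁻¹_{ñ,d,i} ∘ g_{n,d,i}` on `d`-subsets). -/
def gammaSet (n tn i : ℕ) (B : Finset ℕ) : Finset ℕ :=
  ((B.sort (· ≤ ·)).mapIdx fun k x => if k < i then x else x + tn - n).toFinset

/-- The map `h_{n,ñ,d,p,i}` on sign functions. -/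
noncomputable def hFun (n tn i : ℕ) (τ : Finset ℕ → Bool) : Finset ℕ → Bool :=
  ofPlusSet {A | ∃ B, τ B = true ∧ A = gammaSet n tn i B}

open Classical in
/-- `γ_{τ,ñ}(B)`: replace `b_j` by `b_j + ñ - n` whenever the `(τ,B,j)`-series is
right-aligned. -/
noncomputable def gammaFun (n tn : ℕ) (τ : Finset ℕ → Bool) (B : Finset ℕ) : Finset ℕ :=
  B.image fun x => if RightAligned (series n τ (B.erase x)) then x + tn - n else x

/-- The simple bijection `φ_{n,ñ,d,p}` on sign functions. -/
noncomputable def phiFun (n tn : ℕ) (τ : Finset ℕ → Bool) : Finset ℕ → Bool :=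
  ofPlusSet {A | ∃ B, τ B = true ∧ A = gammaFun n tn τ B}

/-!
The glued co-signotope is the union of the `+`-sets of the `τ_i`. The heart of the matter is that
in `τ ∈ 𝒮̄_{q,i}(n,d)` with `q + d ≤ n` every `+`-subset `B` is aligned: the `(τ,B,j)`-series is `+`
on an initial segment up to `b_j` when `j ≤ i`, and on a final segment from `b_j` when `j > i`.
This holds at the source `S_{n,d,i}` and propagates along the edges of `G_{n,d}[τ]`, since a
misaligned element would produce two long runs of `+` in two different series, i.e. more than `q`
`+`-subsets. The runs give `b_j ≤ j - 1 + q` for `j ≤ i` and `b_j ≥ n - d + j + 1 - q` for `j > i`.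
These bounds forbid `τ_i` and `τ_{i'}` with `i' ≥ i + 2` to have `+`-subsets sharing `d - 1`
elements, and sparsity rules out neighbouring indices. So every series of the union is a series of
a single `τ_i`, which makes the union a co-signotope with `+`-components exactly the `τ_i`;
uniqueness follows because any other candidate contains the same `p` subsets.
-/

section

open Finset
open scoped List

section SignChanges

lemma signChanges_cons_cons (a b : Bool) (l : List Bool) :
    signChanges (a :: b :: l) = (if a = b then 0 else 1) + signChanges (b :: l) := by
  by_cases h : a = b <;> simp [signChanges, h, Nat.add_comm]

lemma signChanges_le_cons (a : Bool) (l : List Bool) : signChanges l ≤ signChanges (a :: l) := by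
  cases l with
  | nil => exact le_rfl
  | cons b l => rw [signChanges_cons_cons]; omega

lemma signChanges_cons_le_cons_cons (x a : Bool) (l : List Bool) :
    signChanges (x :: l) ≤ signChanges (x :: a :: l) := by
  cases l with
  | nil => exact Nat.zero_le _
  | cons b l =>
    rw [signChanges_cons_cons, signChanges_cons_cons x a, signChanges_cons_cons a b]
    cases x <;> cases a <;> cases b <;> simp <;> omega

lemma signChanges_cons_le_of_sublist {l₁ l₂ : List Bool} (h : l₁ <+ l₂) (x : Bool) :
    signChanges (x :: l₁) ≤ signChanges (x :: l₂) := by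
  induction h generalizing x with
  | slnil => exact le_rfl
  | cons a _ ih => exact (ih x).trans (signChanges_cons_le_cons_cons x a _)
  | cons_cons a _ ih =>
    rw [signChanges_cons_cons, signChanges_cons_cons]
    exact Nat.add_le_add_left (ih a) _

lemma signChanges_le_of_sublist {l₁ l₂ : List Bool} (h : l₁ <+ l₂) :
    signChanges l₁ ≤ signChanges l₂ := by
  induction h with
  | slnil => exact le_rfl
  | cons a _ ih => exact ih.trans (signChanges_le_cons a _)
  | cons_cons a h _ => exact signChanges_cons_le_of_sublist h a

lemma not_sublist_of_signChanges_le_one {l : List Bool} (hl : signChanges l ≤ 1) (a : Bool) :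
    ¬ [a, !a, a] <+ l := fun h => by
  have := signChanges_le_of_sublist h
  cases a <;> simp [signChanges_cons_cons] at this <;> omega

end SignChanges

section Rows

variable {n d : ℕ} {τ : Finset ℕ → Bool}

lemma IsCoSignotope.finite_support (hτ : IsCoSignotope n d τ) :
    {A | τ A = true}.Finite :=
  (Icc 1 n).powerset.finite_toSet.subset fun A hA => by simpa [← coe_subset] using (hτ.1 A hA).1

lemma IsCoSignotope.card_le_plusCount (hτ : IsCoSignotope n d τ)
    {F : Finset (Finset ℕ)} (hF : ∀ A ∈ F, τ A = true) : #F ≤ plusCount τ := by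
  rw [plusCount, ← Set.ncard_coe_finset]
  exact Set.ncard_le_ncard (fun A hA => hF A hA) hτ.finite_support

lemma IsCoSignotope.plusCount_pos (hτ : IsCoSignotope n d τ) {A : Finset ℕ}
    (hA : τ A = true) : 0 < plusCount τ :=
  (Set.ncard_pos hτ.finite_support).2 ⟨A, hA⟩

lemma IsCoSignotope.row_convex (hτ : IsCoSignotope n d τ) {C : Finset ℕ}
    (hC : C ⊆ Icc 1 n) (hCd : #C + 1 = d) {x y z : ℕ} (hx : x ∈ Icc 1 n \ C)
    (hy : y ∈ Icc 1 n \ C) (hz : z ∈ Icc 1 n \ C) (hxy : x < y) (hyz : y < z)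
    (hxz : τ (insert x C) = τ (insert z C)) : τ (insert y C) = τ (insert x C) := by
  have hyC := (mem_sdiff.1 hy).2
  have hrow : signChanges (series n τ C) ≤ 1 := by
    simpa [erase_insert hyC] using hτ.2 (insert y C) (insert_subset (mem_sdiff.1 hy).1 hC)
      (by rw [card_insert_of_notMem hyC, hCd]) y (mem_insert_self y C)
  have hsub : [x, y, z] <+ (Icc 1 n \ C).sort (· ≤ ·) := by
    refine List.sublist_of_subperm_of_pairwise (r := (· ≤ ·)) (List.subperm_of_subset ?_ ?_) ?_
      (Finset.pairwise_sort _ _)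
    · simp [hxy.ne, (hxy.trans hyz).ne, hyz.ne]
    · intro u hu
      simp only [List.mem_cons, List.not_mem_nil, or_false] at hu
      rcases hu with rfl | rfl | rfl <;> simpa [mem_sort] using ‹_ ∈ Icc 1 n \ C›
    · simp [hxy.le, (hxy.trans hyz).le, hyz.le]
  by_contra hne
  apply not_sublist_of_signChanges_le_one hrow (τ (insert x C))
  have hmap := hsub.map (fun u => τ (insert u C))
  rw [List.map_cons, List.map_cons, List.map_cons, List.map_nil, ← hxz,
    show τ (insert y C) = !τ (insert x C) by revert hne; cases τ (insert y C) <;> simp] at hmap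
  exact hmap

end Rows

section NumLT

/-- For `b ∈ B` this is the `0`-based position of `b` in `B`: `b = b_{numLT B b + 1}`. -/
def numLT (B : Finset ℕ) (b : ℕ) : ℕ := #{c ∈ B | c < b}

lemma numLT_insert {C : Finset ℕ} {x : ℕ} (hx : x ∉ C) (b : ℕ) :
    numLT (insert x C) b = numLT C b + if x < b then 1 else 0 := by
  unfold numLT
  rw [filter_insert]
  split_ifs with h
  · rw [card_insert_of_notMem (by simp [hx])]
  · rfl

lemma numLT_erase_self (B : Finset ℕ) (b : ℕ) : numLT (B.erase b) b = numLT B b := by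
  unfold numLT
  rw [filter_erase, erase_eq_of_notMem (by simp)]

lemma numLT_mono {A B : Finset ℕ} (h : A ⊆ B) (b : ℕ) : numLT A b ≤ numLT B b :=
  card_le_card (filter_subset_filter _ h)

lemma numLT_le_add_card_sdiff (A D : Finset ℕ) (b : ℕ) : numLT A b ≤ numLT D b + #(A \ D) := by
  refine (card_le_card fun c hc => ?_).trans (card_union_le _ _)
  by_cases hcD : c ∈ D <;> simp_all [mem_filter]

lemma exists_numLT_eq {D : Finset ℕ} {j : ℕ} (hj : j < #D) : ∃ t ∈ D, numLT D t = j := by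
  induction D using Finset.induction_on_max generalizing j with
  | empty => simp at hj
  | insert a s hlt ih =>
    have ha : a ∉ s := fun h => lt_irrefl a (hlt a h)
    rw [card_insert_of_notMem ha] at hj
    rcases Nat.lt_succ_iff_lt_or_eq.1 hj with hj | rfl
    · obtain ⟨t, ht, rfl⟩ := ih hj
      refine ⟨t, mem_insert_of_mem ht, ?_⟩
      rw [numLT_insert ha, if_neg (not_lt.2 (hlt t ht).le), add_zero]
    · refine ⟨a, mem_insert_self a s, ?_⟩
      rw [numLT_insert ha, if_neg (lt_irrefl a), add_zero, numLT, filter_true_of_mem hlt]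

lemma card_Icc_one_sdiff_add_numLT {C : Finset ℕ} {b : ℕ} (hC : ∀ c ∈ C, 1 ≤ c) (hb : b ∉ C) :
    #(Icc 1 b \ C) + numLT C b = b := by
  have : Icc 1 b ∩ C = {c ∈ C | c < b} := by
    ext c
    simp only [mem_inter, mem_Icc, mem_filter]
    constructor
    · rintro ⟨⟨-, hcb⟩, hc⟩
      exact ⟨hc, lt_of_le_of_ne hcb (ne_of_mem_of_not_mem hc hb)⟩
    · rintro ⟨hc, hcb⟩
      exact ⟨⟨hC c hc, hcb.le⟩, hc⟩
  rw [numLT, ← this, card_sdiff_add_card_inter, Nat.card_Icc, Nat.add_sub_cancel]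

lemma card_Icc_sdiff_add_card {n : ℕ} {C : Finset ℕ} (hC : C ⊆ Icc 1 n) (b : ℕ) :
    #(Icc b n \ C) + #C = n + 1 - b + numLT C b := by
  have : Icc b n ∩ C = {c ∈ C | ¬ c < b} := by
    ext c
    simp only [mem_inter, mem_Icc, mem_filter, not_lt]
    constructor
    · rintro ⟨⟨hbc, -⟩, hc⟩
      exact ⟨hc, hbc⟩
    · rintro ⟨hc, hbc⟩
      exact ⟨⟨hbc, (mem_Icc.1 (hC hc)).2⟩, hc⟩
  have hsplit := card_filter_add_card_filter_not (s := C) (· < b)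
  have hcard := card_sdiff_add_card_inter (Icc b n) C
  rw [this, Nat.card_Icc] at hcard
  rw [numLT]
  omega

end NumLT

section Alignment

variable {n d : ℕ} {τ : Finset ℕ → Bool}

/-- `b` is *left-aligned* in `B = insert b C`: if `b = b_j`, the `(τ, B, j)`-series is `+` at
all positions up to `b`. Right-alignment is `PlusAbove`. -/
def PlusBelow (τ : Finset ℕ → Bool) (C : Finset ℕ) (b : ℕ) : Prop :=
  ∀ x ∈ Icc 1 b \ C, τ (insert x C) = true

def PlusAbove (n : ℕ) (τ : Finset ℕ → Bool) (C : Finset ℕ) (b : ℕ) : Prop :=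
  ∀ x ∈ Icc b n \ C, τ (insert x C) = true

lemma card_image_insert_sdiff (S C : Finset ℕ) :
    #((S \ C).image (insert · C)) = #(S \ C) :=
  card_image_of_injOn fun _ hx _ _ hxy => (insert_inj (mem_sdiff.1 hx).2).1 hxy

lemma IsCoSignotope.card_sdiff_le_plusCount (hτ : IsCoSignotope n d τ)
    {S C : Finset ℕ} (h : ∀ x ∈ S \ C, τ (insert x C) = true) : #(S \ C) ≤ plusCount τ := by
  rw [← card_image_insert_sdiff]
  refine hτ.card_le_plusCount ?_
  simp only [mem_image]
  rintro A ⟨x, hx, rfl⟩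
  exact h x hx

/-- The rows through `C₁` and `C₂` share at most the set `C₁ ∪ C₂`. -/
lemma IsCoSignotope.card_sdiff_add_card_sdiff_le (hτ : IsCoSignotope n d τ)
    {S₁ C₁ S₂ C₂ : Finset ℕ} (h₁ : ∀ x ∈ S₁ \ C₁, τ (insert x C₁) = true)
    (h₂ : ∀ x ∈ S₂ \ C₂, τ (insert x C₂) = true) (hC : ¬ C₂ ⊆ C₁) :
    #(S₁ \ C₁) + #(S₂ \ C₂) ≤ plusCount τ + 1 := by
  set F₁ := (S₁ \ C₁).image (insert · C₁)
  set F₂ := (S₂ \ C₂).image (insert · C₂)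
  have hF₁ : #F₁ = #(S₁ \ C₁) := card_image_insert_sdiff S₁ C₁
  have hF₂ : #F₂ = #(S₂ \ C₂) := card_image_insert_sdiff S₂ C₂
  have hinter : F₁ ∩ F₂ ⊆ {C₁ ∪ C₂} := by
    intro A hA
    simp only [F₁, F₂, mem_inter, mem_image] at hA
    obtain ⟨⟨x, hx, rfl⟩, y, -, hyx⟩ := hA
    have hC₂ : C₂ ⊆ insert x C₁ := hyx ▸ subset_insert y C₂
    obtain ⟨c, hc₂, hc₁⟩ := not_subset.1 hC
    have hxc : c = x := by simpa [hc₁] using hC₂ hc₂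
    refine mem_singleton.2 (Subset.antisymm ?_ (union_subset (subset_insert x C₁) hC₂))
    exact insert_subset (mem_union_right _ (hxc ▸ hc₂)) subset_union_left
  have hunion := hτ.card_le_plusCount (F := F₁ ∪ F₂) (by
    simp only [F₁, F₂, mem_union, mem_image]
    rintro A (⟨x, hx, rfl⟩ | ⟨x, hx, rfl⟩)
    exacts [h₁ x hx, h₂ x hx])
  have := card_union_add_card_inter F₁ F₂
  have := card_le_card hinter
  rw [card_singleton] at this
  omega

lemma PlusBelow.le_numLT_add_plusCount (hτ : IsCoSignotope n d τ) {B : Finset ℕ}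
    (hB : B ⊆ Icc 1 n) {b : ℕ} (h : PlusBelow τ (B.erase b) b) :
    b ≤ numLT B b + plusCount τ := by
  have h₁ := hτ.card_sdiff_le_plusCount h
  have h₂ := card_Icc_one_sdiff_add_numLT (C := B.erase b)
    (fun c hc => (mem_Icc.1 (hB (mem_of_mem_erase hc))).1) (notMem_erase b B)
  rw [numLT_erase_self] at h₂
  omega

lemma PlusAbove.add_numLT_le (hτ : IsCoSignotope n d τ) {B : Finset ℕ}
    (hB : B ⊆ Icc 1 n) {b : ℕ} (hb : b ∈ B) (h : PlusAbove n τ (B.erase b) b) :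
    n + 2 + numLT B b ≤ b + plusCount τ + #B := by
  have h₁ := hτ.card_sdiff_le_plusCount h
  have h₂ := card_Icc_sdiff_add_card ((erase_subset b B).trans hB) b
  rw [numLT_erase_self] at h₂
  have := card_erase_add_one hb
  have := (mem_Icc.1 (hB hb)).2
  omega

lemma PlusBelow.lt_plusCount_add_card_of_plusAbove (hτ : IsCoSignotope n d τ)
    {X Y : Finset ℕ} (hX : X ⊆ Icc 1 n) (hY : Y ⊆ Icc 1 n) (hXY : #X = #Y) {b : ℕ}
    (hbX : b ∈ X) (hbY : b ∈ Y) (hne : X.erase b ≠ Y.erase b) (hnum : numLT X b = numLT Y b)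
    (hL : PlusBelow τ (X.erase b) b) (hR : PlusAbove n τ (Y.erase b) b) :
    n < plusCount τ + #X := by
  have hsub : ¬ Y.erase b ⊆ X.erase b := fun h => hne (eq_of_subset_of_card_le h (by
    rw [card_erase_of_mem hbX, card_erase_of_mem hbY, hXY])).symm
  have h := hτ.card_sdiff_add_card_sdiff_le hL hR hsub
  have h₁ := card_Icc_one_sdiff_add_numLT (C := X.erase b)
    (fun c hc => (mem_Icc.1 (hX (mem_of_mem_erase hc))).1) (notMem_erase b X)
  have h₂ := card_Icc_sdiff_add_card ((erase_subset b Y).trans hY) b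
  rw [numLT_erase_self] at h₁ h₂
  have := card_erase_add_one hbY
  have := (mem_Icc.1 (hY hbY)).2
  omega

lemma IsCoSignotope.plusBelow_or_plusAbove (hτ : IsCoSignotope n d τ) {B : Finset ℕ}
    (hB : B ⊆ Icc 1 n) (hBd : #B = d) {b : ℕ} (hb : b ∈ B) (hτB : τ B = true) :
    PlusBelow τ (B.erase b) b ∨ PlusAbove n τ (B.erase b) b := by
  by_contra h
  simp only [PlusBelow, PlusAbove, not_or, not_forall, exists_prop, Bool.not_eq_true] at h
  obtain ⟨⟨x, hx, hτx⟩, ⟨z, hz, hτz⟩⟩ := h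
  rw [← insert_erase hb] at hτB
  have hbx : x ≠ b := by rintro rfl; simp [hτx] at hτB
  have hbz : z ≠ b := by rintro rfl; simp [hτz] at hτB
  have hx' := mem_Icc.1 (mem_sdiff.1 hx).1
  have hz' := mem_Icc.1 (mem_sdiff.1 hz).1
  have := hτ.row_convex ((erase_subset b B).trans hB) (by rw [card_erase_add_one hb, hBd])
    (mem_sdiff.2 ⟨mem_Icc.2 ⟨hx'.1, by omega⟩, (mem_sdiff.1 hx).2⟩)
    (mem_sdiff.2 ⟨hB hb, notMem_erase b B⟩)
    (mem_sdiff.2 ⟨mem_Icc.2 ⟨by omega, hz'.2⟩, (mem_sdiff.1 hz).2⟩)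
    (by omega) (by omega) (hτx.trans hτz.symm)
  rw [hτB, hτx] at this
  exact Bool.false_ne_true this.symm

lemma PlusBelow.extend (hτ : IsCoSignotope n d τ) {C : Finset ℕ} (hC : C ⊆ Icc 1 n)
    (hCd : #C + 1 = d) {x y : ℕ} (h : PlusBelow τ C x) (hx : x ∈ Icc 1 n \ C)
    (hy : y ∈ Icc 1 n \ C) (hτy : τ (insert y C) = true) : PlusBelow τ C y := by
  have hx' := mem_Icc.1 (mem_sdiff.1 hx).1
  have hτx : τ (insert x C) = true :=
    h x (mem_sdiff.2 ⟨mem_Icc.2 ⟨hx'.1, le_rfl⟩, (mem_sdiff.1 hx).2⟩)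
  intro t ht
  obtain ⟨ht, htC⟩ := mem_sdiff.1 ht
  rw [mem_Icc] at ht
  rcases le_or_gt t x with htx | hxt
  · exact h t (mem_sdiff.2 ⟨mem_Icc.2 ⟨ht.1, htx⟩, htC⟩)
  rcases eq_or_lt_of_le ht.2 with rfl | hty
  · exact hτy
  have htI : t ∈ Icc 1 n \ C :=
    mem_sdiff.2 ⟨mem_Icc.2 ⟨ht.1, hty.le.trans (mem_Icc.1 (mem_sdiff.1 hy).1).2⟩, htC⟩
  rw [hτ.row_convex hC hCd hx htI hy hxt hty (hτx.trans hτy.symm), hτx]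

lemma PlusAbove.extend (hτ : IsCoSignotope n d τ) {C : Finset ℕ} (hC : C ⊆ Icc 1 n)
    (hCd : #C + 1 = d) {x y : ℕ} (h : PlusAbove n τ C x) (hx : x ∈ Icc 1 n \ C)
    (hy : y ∈ Icc 1 n \ C) (hτy : τ (insert y C) = true) : PlusAbove n τ C y := by
  have hx' := mem_Icc.1 (mem_sdiff.1 hx).1
  have hτx : τ (insert x C) = true :=
    h x (mem_sdiff.2 ⟨mem_Icc.2 ⟨le_rfl, hx'.2⟩, (mem_sdiff.1 hx).2⟩)
  intro t ht
  obtain ⟨ht, htC⟩ := mem_sdiff.1 ht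
  rw [mem_Icc] at ht
  rcases le_or_gt x t with hxt | htx
  · exact h t (mem_sdiff.2 ⟨mem_Icc.2 ⟨hxt, ht.2⟩, htC⟩)
  rcases eq_or_lt_of_le ht.1 with rfl | hyt
  · exact hτy
  have htI : t ∈ Icc 1 n \ C :=
    mem_sdiff.2 ⟨mem_Icc.2 ⟨(mem_Icc.1 (mem_sdiff.1 hy).1).1.trans hyt.le, ht.2⟩, htC⟩
  rw [hτ.row_convex hC hCd hy htI hx hyt htx (hτy.trans hτx.symm), hτy]

def IsAligned (n i : ℕ) (τ : Finset ℕ → Bool) (B : Finset ℕ) : Prop :=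
  ∀ b ∈ B, (numLT B b < i → PlusBelow τ (B.erase b) b) ∧
    (i ≤ numLT B b → PlusAbove n τ (B.erase b) b)

lemma numLT_sourceSubset_le {j b : ℕ} (hb : b ≤ n - d + j + 1) :
    numLT (sourceSubset n d j) b ≤ j := by
  refine (card_le_card fun c hc => ?_).trans (Nat.card_Icc 1 j).le
  simp only [sourceSubset, mem_filter, mem_union, mem_Icc] at hc ⊢
  omega

lemma le_numLT_sourceSubset {j k b : ℕ} (hk : k ≤ j) (hb : k < b) :
    k ≤ numLT (sourceSubset n d j) b := by
  refine (Nat.card_Icc 1 k).ge.trans (card_le_card fun c hc => ?_)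
  simp only [sourceSubset, mem_filter, mem_union, mem_Icc] at hc ⊢
  omega

lemma isAligned_sourceSubset {i : ℕ} (hS : τ (sourceSubset n d i) = true) :
    IsAligned n i τ (sourceSubset n d i) := by
  set S := sourceSubset n d i with hSdef
  intro b hb
  have hrow : ∀ s : Finset ℕ, (∀ x ∈ s, x ≠ b → x ∈ S) →
      ∀ x ∈ s \ S.erase b, τ (insert x (S.erase b)) = true := by
    intro s hs x hx
    obtain ⟨hxs, hxS⟩ := mem_sdiff.1 hx
    by_cases hxb : x = b
    · rwa [hxb, insert_erase hb]
    · exact absurd (mem_erase.2 ⟨hxb, hs x hxs hxb⟩) hxS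
  have hb' := hb
  simp only [hSdef, sourceSubset, mem_union, mem_Icc] at hb'
  rcases hb' with hb' | hb'
  · have hnum : numLT S b < i := by
      have := card_le_card (s := {c ∈ S | c < b}) (t := Icc 1 (b - 1)) fun c hc => by
        simp only [hSdef, sourceSubset, mem_filter, mem_union, mem_Icc] at hc ⊢
        omega
      rw [Nat.card_Icc] at this
      unfold numLT
      omega
    refine ⟨fun _ => hrow _ fun x hx _ => ?_, fun h => absurd h (not_le.2 hnum)⟩
    simp only [hSdef, sourceSubset, mem_union, mem_Icc] at hx ⊢
    omega
  · refine ⟨fun h => absurd h (not_lt.2 (le_numLT_sourceSubset le_rfl (by omega))),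
      fun _ => hrow _ fun x hx _ => ?_⟩
    simp only [hSdef, sourceSubset, mem_union, mem_Icc] at hx ⊢
    omega

lemma IsAligned.of_gAdj {i : ℕ} (hτ : IsCoSignotope n d τ) (hp : plusCount τ + d ≤ n)
    {X Y : Finset ℕ} (hX : IsAligned n i τ X) (hτY : τ Y = true) (hXY : GAdj n d X Y) :
    IsAligned n i τ Y := by
  obtain ⟨hXs, hXd, hYs, hYd, x, hx, y, hy, hyX, rfl, hgap⟩ := hXY
  set C := X.erase x
  have hxC : x ∉ C := notMem_erase x X
  have hyC : y ∉ C := fun h => hyX (mem_of_mem_erase h)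
  have hCX : insert x C = X := insert_erase hx
  have hside : ∀ c ∈ C, (c < x ↔ c < y) ∧ (x < c ↔ y < c) := by
    intro c hc
    have := hgap c hc
    have := ne_of_mem_of_not_mem hc hxC
    have := ne_of_mem_of_not_mem hc hyC
    omega
  intro b hb
  rcases mem_insert.1 hb with rfl | hbC
  · have hnum : numLT (insert b C) b = numLT X x := by
      rw [numLT_insert hyC, ← hCX, numLT_insert hxC, if_neg (lt_irrefl b),
        if_neg (lt_irrefl x), numLT, numLT, filter_congr fun c hc => (hside c hc).1]
    have hCs : C ⊆ Icc 1 n := (erase_subset x X).trans hXs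
    have hCd : #C + 1 = d := by rw [card_erase_add_one hx, hXd]
    have hxI : x ∈ Icc 1 n \ C := mem_sdiff.2 ⟨hXs hx, hxC⟩
    have hyI : b ∈ Icc 1 n \ C := mem_sdiff.2 ⟨hy, hyC⟩
    rw [erase_insert hyC, hnum]
    exact ⟨fun h => ((hX x hx).1 h).extend hτ hCs hCd hxI hyI hτY,
      fun h => ((hX x hx).2 h).extend hτ hCs hCd hxI hyI hτY⟩
  · have hbX : b ∈ X := mem_of_mem_erase hbC
    have hnum : numLT X b = numLT (insert y C) b := by
      rw [← hCX, numLT_insert hxC, numLT_insert hyC, if_congr (hside b hbC).2 rfl rfl]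
    have hne : X.erase b ≠ (insert y C).erase b := by
      intro h
      have : x ∈ X.erase b := mem_erase.2 ⟨(ne_of_mem_of_not_mem hbC hxC).symm, hx⟩
      rw [h, mem_erase, mem_insert] at this
      exact this.2.elim (fun h => hyX (h ▸ hx)) hxC
    have hcard : #X = #(insert y C) := hXd.trans hYd.symm
    rcases hτ.plusBelow_or_plusAbove hYs hYd hb hτY with hL | hR
    · refine ⟨fun _ => hL, fun hi => ?_⟩
      have := hL.lt_plusCount_add_card_of_plusAbove hτ hYs hXs hcard.symm hb hbX hne.symm
        hnum.symm ((hX b hbX).2 (hnum ▸ hi))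
      omega
    · refine ⟨fun hi => ?_, fun _ => hR⟩
      have := ((hX b hbX).1 (hnum ▸ hi)).lt_plusCount_add_card_of_plusAbove hτ hXs hYs hcard
        hbX hb hne hnum hR
      omega

lemma isAligned_of_mem_comp {i : ℕ} (hτ : IsCoSignotope n d τ) (hp : plusCount τ + d ≤ n)
    {B : Finset ℕ} (hB : B ∈ comp n d τ i) : IsAligned n i τ B := by
  obtain ⟨hS, -, hpath⟩ := hB
  induction hpath with
  | refl => exact isAligned_sourceSubset hS
  | tail _ hstep ih => exact ih.of_gAdj hτ hp hstep.2.1 hstep.2.2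

end Alignment

section Components

variable {n d p i : ℕ} {τ : Finset ℕ → Bool}

lemma le_numLT_add_of_mem_coSigOnly (hτ : τ ∈ coSigOnly n d p i) (hp : p + d ≤ n)
    {B : Finset ℕ} (hB : τ B = true) {b : ℕ} (hb : b ∈ B) (hbi : numLT B b < i) :
    b ≤ numLT B b + p := by
  obtain ⟨hcos, rfl, hcomp⟩ := hτ
  exact ((isAligned_of_mem_comp hcos hp (hcomp B hB) b hb).1 hbi).le_numLT_add_plusCount hcos
    (hcos.1 B hB).1

lemma add_numLT_le_of_mem_coSigOnly (hτ : τ ∈ coSigOnly n d p i) (hp : p + d ≤ n)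
    {B : Finset ℕ} (hB : τ B = true) {b : ℕ} (hb : b ∈ B) (hbi : i ≤ numLT B b) :
    n + 2 + numLT B b ≤ b + p + d := by
  obtain ⟨hcos, rfl, hcomp⟩ := hτ
  have := ((isAligned_of_mem_comp hcos hp (hcomp B hB) b hb).2 hbi).add_numLT_le hcos
    (hcos.1 B hB).1 hb
  rwa [(hcos.1 B hB).2] at this

lemma eq_of_mem_coSigOnly_of_sourceSubset (hτ : τ ∈ coSigOnly n d p i) (hp : p + d ≤ n)
    (hi : i ≤ d) {j : ℕ} (hS : τ (sourceSubset n d j) = true) : j = i := by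
  rcases lt_trichotomy i j with hij | rfl | hji
  · have hb : i + 1 ∈ sourceSubset n d j := by
      simp only [sourceSubset, mem_union, mem_Icc]
      omega
    have hnum : i ≤ numLT (sourceSubset n d j) (i + 1) := le_numLT_sourceSubset hij.le (by omega)
    have := add_numLT_le_of_mem_coSigOnly hτ hp hS hb hnum
    omega
  · rfl
  · have hb : n - d + j + 1 ∈ sourceSubset n d j := by
      simp only [sourceSubset, mem_union, mem_Icc]
      omega
    have hnum := numLT_sourceSubset_le (n := n) (d := d) (le_refl (n - d + j + 1))
    have := le_numLT_add_of_mem_coSigOnly hτ hp hS hb (by omega)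
    omega

/-- `d ≤ #(A ∩ A') + 1` says that `A` and `A'` are equal or adjacent in the Johnson graph. The
element in position `i₁ - 2` of `A ∩ A'` would be left-aligned in `A` and right-aligned in `A'`,
which costs more than `p₁ + p₂` `+`-subsets. -/
lemma coSigOnly_separated {p₁ p₂ i₁ i₂ : ℕ} {τ₁ τ₂ : Finset ℕ → Bool}
    (h₁ : τ₁ ∈ coSigOnly n d p₁ i₁) (h₂ : τ₂ ∈ coSigOnly n d p₂ i₂) (hp : p₁ + p₂ + d ≤ n)
    (hi₁ : i₁ ≤ d) (hi : i₂ + 2 ≤ i₁) {A A' : Finset ℕ} (hA : τ₁ A = true) (hA' : τ₂ A' = true)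
    (hAA' : d ≤ #(A ∩ A') + 1) : False := by
  have hAd := (h₁.1.1 A hA).2
  obtain ⟨t, ht, hnum⟩ := exists_numLT_eq (D := A ∩ A') (j := i₁ - 2) (by omega)
  have hAD := card_sdiff_add_card_eq_card (inter_subset_left : A ∩ A' ⊆ A)
  have hle₁ := numLT_le_add_card_sdiff A (A ∩ A') t
  have hle₂ := numLT_mono (inter_subset_right : A ∩ A' ⊆ A') t
  have := le_numLT_add_of_mem_coSigOnly h₁ (by omega) hA (mem_inter.1 ht).1 (by omega)
  have := add_numLT_le_of_mem_coSigOnly h₂ (by omega) hA' (mem_inter.1 ht).2 (by omega)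
  omega

lemma GAdj.le_card_inter_add_one {X Y : Finset ℕ} (h : GAdj n d X Y) :
    d ≤ #(X ∩ Y) + 1 := by
  obtain ⟨-, hXd, -, -, x, hx, y, -, -, rfl, -⟩ := h
  have hsub : X.erase x ⊆ X ∩ insert y (X.erase x) :=
    subset_inter (erase_subset x X) (subset_insert y _)
  have := card_le_card hsub
  rw [← hXd, ← card_erase_add_one hx]
  omega

end Components

lemma ofPlusSet_eq_true {S : Set (Finset ℕ)} {A : Finset ℕ} : ofPlusSet S A = true ↔ A ∈ S := by
  unfold ofPlusSet
  split_ifs with h <;> simp [h]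

lemma ofPlusSet_setOf (τ : Finset ℕ → Bool) : ofPlusSet {A | τ A = true} = τ :=
  funext fun _ => Bool.eq_iff_iff.2 ofPlusSet_eq_true

noncomputable def plusUnion {ι : Type*} (τs : ι → Finset ℕ → Bool) : Finset ℕ → Bool :=
  ofPlusSet {A | ∃ m, τs m A = true}

lemma plusUnion_eq_true {ι : Type*} {τs : ι → Finset ℕ → Bool} {A : Finset ℕ} :
    plusUnion τs A = true ↔ ∃ m, τs m A = true :=
  ofPlusSet_eq_true

section Gluing

variable {n d p : ℕ} {c : Fin (d + 1) → ℕ} {τs : Fin (d + 1) → Finset ℕ → Bool}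

lemma IsSparseComposition.add_le (hc : IsSparseComposition d p c) {m m' : Fin (d + 1)}
    (hm : m ≠ m') : c m + c m' ≤ p := by
  rw [← hc.1, ← sum_pair hm]
  exact sum_le_sum_of_subset (subset_univ _)

lemma IsSparseComposition.le (hc : IsSparseComposition d p c) (m : Fin (d + 1)) :
    c m ≤ p :=
  hc.1 ▸ single_le_sum (fun _ _ => Nat.zero_le _) (mem_univ m)

lemma IsSparseComposition.eq_zero_or_eq_zero (hc : IsSparseComposition d p c)
    {m m' : Fin (d + 1)} (h : (m' : ℕ) + 1 = m) : c m = 0 ∨ c m' = 0 := by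
  have := hc.2 m (by omega)
  rwa [show (⟨(m : ℕ) - 1, _⟩ : Fin (d + 1)) = m' from Fin.ext (by rw [Fin.val_mk]; omega)] at this

/-- Sparsity keeps neighbouring components apart, and `coSigOnly_separated` the others. -/
lemma plusUnion_separated (hp : p + d ≤ n) (hc : IsSparseComposition d p c)
    (hτs : ∀ m : Fin (d + 1), τs m ∈ coSigOnly n d (c m) m) {m m' : Fin (d + 1)} (hm : m ≠ m')
    {A A' : Finset ℕ} (hA : τs m A = true) (hA' : τs m' A' = true)
    (hAA' : d ≤ #(A ∩ A') + 1) : False := by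
  wlog h : (m' : ℕ) < m generalizing m m' A A'
  · exact this hm.symm hA' hA (by rwa [inter_comm])
      (lt_of_le_of_ne (not_lt.1 h) (fun h => hm (Fin.ext h)))
  have hpos := (hτs m).1.plusCount_pos hA
  have hpos' := (hτs m').1.plusCount_pos hA'
  rw [(hτs m).2.1] at hpos
  rw [(hτs m').2.1] at hpos'
  rcases Nat.lt_or_ge ((m' : ℕ) + 1) m with h2 | h2
  · exact coSigOnly_separated (hτs m) (hτs m') (by have := hc.add_le hm; omega)
      (Nat.lt_succ_iff.1 m.2) h2 hA hA' hAA'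
  · rcases hc.eq_zero_or_eq_zero (m := m) (m' := m') (by omega) with h0 | h0 <;> omega

lemma exists_series_plusUnion_eq (hp : p + d ≤ n) (hc : IsSparseComposition d p c)
    (hτs : ∀ m : Fin (d + 1), τs m ∈ coSigOnly n d (c m) m) (C : Finset ℕ) :
    ∃ m, series n (plusUnion τs) C = series n (τs m) C := by
  by_cases h : ∃ m, ∃ x ∉ C, τs m (insert x C) = true
  · obtain ⟨m, x, hxC, hx⟩ := h
    refine ⟨m, List.map_congr_left fun y hy => Bool.eq_iff_iff.2 ?_⟩
    have hyC := (mem_sdiff.1 (mem_sort _ |>.1 hy)).2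
    refine ⟨fun hy' => ?_, fun hy' => plusUnion_eq_true.2 ⟨m, hy'⟩⟩
    obtain ⟨m', hm'⟩ := plusUnion_eq_true.1 hy'
    by_contra hne
    refine plusUnion_separated hp hc hτs (by rintro rfl; exact hne hm') hx hm' ?_
    have := card_le_card (subset_inter (subset_insert x C) (subset_insert y C))
    rw [← ((hτs m).1.1 _ hx).2, card_insert_of_notMem hxC]
    omega
  · push Not at h
    refine ⟨0, List.map_congr_left fun y hy => ?_⟩
    have hyC := (mem_sdiff.1 (mem_sort _ |>.1 hy)).2
    have hy' : plusUnion τs (insert y C) = false := Bool.eq_false_iff.2 fun h' => by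
      obtain ⟨m, hm⟩ := plusUnion_eq_true.1 h'
      exact h m y hyC hm
    rw [hy', Bool.eq_false_iff.2 (h 0 y hyC)]

lemma isCoSignotope_plusUnion (hp : p + d ≤ n) (hc : IsSparseComposition d p c)
    (hτs : ∀ m : Fin (d + 1), τs m ∈ coSigOnly n d (c m) m) :
    IsCoSignotope n d (plusUnion τs) := by
  refine ⟨fun A hA => ?_, fun B hB hBd b hb => ?_⟩
  · obtain ⟨m, hm⟩ := plusUnion_eq_true.1 hA
    exact (hτs m).1.1 A hm
  · obtain ⟨m, hm⟩ := exists_series_plusUnion_eq hp hc hτs (B.erase b)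
    rw [hm]
    exact (hτs m).1.2 B hB hBd b hb

lemma plusCount_plusUnion (hp : p + d ≤ n) (hc : IsSparseComposition d p c)
    (hτs : ∀ m : Fin (d + 1), τs m ∈ coSigOnly n d (c m) m) :
    plusCount (plusUnion τs) = p := by
  have hunion : {A | plusUnion τs A = true} = ⋃ m, {A | τs m A = true} := by
    ext A
    simp [plusUnion_eq_true]
  rw [plusCount, hunion, Set.ncard_iUnion_of_finite (fun m => (hτs m).1.finite_support),
    finsum_eq_sum_of_fintype, ← hc.1]
  · exact sum_congr rfl fun m _ => (hτs m).2.1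
  · intro m m' hm
    refine Set.disjoint_left.2 fun A hA hA' => plusUnion_separated hp hc hτs hm hA hA' ?_
    rw [inter_self, ((hτs m).1.1 A hA).2]
    omega

lemma comp_plusUnion (hp : p + d ≤ n) (hc : IsSparseComposition d p c)
    (hτs : ∀ m : Fin (d + 1), τs m ∈ coSigOnly n d (c m) m) (m : Fin (d + 1)) :
    comp n d (plusUnion τs) m = {A | τs m A = true} := by
  ext A
  constructor
  · rintro ⟨hS, -, hpath⟩
    obtain ⟨m', hm'⟩ := plusUnion_eq_true.1 hS
    obtain rfl : m = m' := Fin.ext <| eq_of_mem_coSigOnly_of_sourceSubset (hτs m')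
      (by have := hc.le m'; omega) (Nat.lt_succ_iff.1 m'.2) hm'
    induction hpath with
    | refl => exact hm'
    | tail _ hstep ih =>
      obtain ⟨-, hY, hXY⟩ := hstep
      obtain ⟨k, hk⟩ := plusUnion_eq_true.1 hY
      by_contra hne
      exact plusUnion_separated hp hc hτs (by rintro rfl; exact hne hk) ih hk
        hXY.le_card_inter_add_one
  · intro hA
    obtain ⟨hS, -, hpath⟩ := (hτs m).2.2 A hA
    refine ⟨plusUnion_eq_true.2 ⟨m, hS⟩, plusUnion_eq_true.2 ⟨m, hA⟩,
      Relation.ReflTransGen.mono ?_ _ _ hpath⟩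
    exact fun X Y h => ⟨plusUnion_eq_true.2 ⟨m, h.1⟩, plusUnion_eq_true.2 ⟨m, h.2.1⟩, h.2.2⟩

lemma eq_plusUnion (hp : p + d ≤ n) (hc : IsSparseComposition d p c)
    (hτs : ∀ m : Fin (d + 1), τs m ∈ coSigOnly n d (c m) m) {τ : Finset ℕ → Bool}
    (hτ : τ ∈ coSigSet n d p) (hcomp : ∀ m : Fin (d + 1), compFun n d τ m = τs m) :
    τ = plusUnion τs := by
  have hsub : {A | plusUnion τs A = true} ⊆ {A | τ A = true} := fun A hA => by
    obtain ⟨m, hm⟩ := plusUnion_eq_true.1 hA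
    rw [← hcomp m, compFun, ofPlusSet_eq_true] at hm
    exact hm.2.1
  have heq := Set.eq_of_subset_of_ncard_le hsub
    (by rw [← plusCount, ← plusCount, hτ.2, plusCount_plusUnion hp hc hτs])
    hτ.1.finite_support
  exact funext fun A => Bool.eq_iff_iff.2 (Set.ext_iff.1 heq A).symm

end Gluing

end

theorem statement12_general (n d p : ℕ) (hp : p + d ≤ n)
    (c : Fin (d + 1) → ℕ) (hc : IsSparseComposition d p c)
    (τs : Fin (d + 1) → Finset ℕ → Bool)
    (hτs : ∀ i : Fin (d + 1), τs i ∈ coSigOnly n d (c i) (i : ℕ)) :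
    ∃! τ : Finset ℕ → Bool, τ ∈ coSigSet n d p ∧
      (∀ i : Fin (d + 1), (comp n d τ (i : ℕ)).ncard = c i) ∧
      (∀ i : Fin (d + 1), compFun n d τ (i : ℕ) = τs i) := by
  refine ⟨plusUnion τs, ⟨⟨isCoSignotope_plusUnion hp hc hτs, plusCount_plusUnion hp hc hτs⟩,
    fun m => ?_, fun m => ?_⟩, fun τ h => eq_plusUnion hp hc hτs h.1 h.2.2⟩
  · rw [comp_plusUnion hp hc hτs]
    exact (hτs m).2.1
  · rw [compFun, comp_plusUnion hp hc hτs, ofPlusSet_setOf]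

/-- **Lemma.** For every sparse composition `(c_0, …, c_d)` of `p ≤ n - d` and all
co-signotopes `τ_i ∈ 𝒮̄_{c_i,i}(n,d)`, there is a unique `τ ∈ 𝒮̄_p(n,d)` whose
p-sequence is `(c_0, …, c_d)` and whose `+`-component decomposition is
`Δ(τ) = (τ_0, …, τ_d)`. -/
theorem statement12 (n d p : ℕ) (hdn : d < n) (hp : p + d ≤ n)
    (c : Fin (d + 1) → ℕ) (hc : IsSparseComposition d p c)
    (τs : Fin (d + 1) → Finset ℕ → Bool)
    (hτs : ∀ i : Fin (d + 1), τs i ∈ coSigOnly n d (c i) (i : ℕ)) :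
    ∃! τ : Finset ℕ → Bool, τ ∈ coSigSet n d p ∧
      (∀ i : Fin (d + 1), (comp n d τ (i : ℕ)).ncard = c i) ∧
      (∀ i : Fin (d + 1), compFun n d τ (i : ℕ) = τs i) :=
  statement12_general n d p hp c hc τs hτs
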